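/- Type Safety of GS (Proposition 1): let e be a closed GS expression. If ⊢ e : T (i.e., e successfully elaborates to a GSCheck expression of type T), then evaluation of e terminates with a result r, where r is either a GSCheck value v or the error term error; in particular well-typed closed expressions do not get stuck. -/

import Mathlib

open Classical

noncomputable section

namespace GS

/-! ## Base types, constants, primitive operations -/

/-- Base types. -/
inductive BaseTy where
  | real
  | bool
deriving DecidableEq

/-- Constants (literal values of base types). -/
inductive Const where
  | r : ℝ → Const
  | b : Bool → Const

/-- Primitive (binary) operations. -/
inductive Op where
  | add
  | mul
  | le

/-! ## Gradual sensitivities: sensitivity intervals -/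

/-- A gradual sensitivity: a valid interval `[lo,hi]` with `0 ≤ lo ≤ hi ≤ ∞`
over the extended nonnegative reals. The unknown sensitivity `?` is `[0,∞]`
and a fully precise sensitivity `s` is `[s,s]`. -/
structure SI where
  lo : ENNReal
  hi : ENNReal
  isle : lo ≤ hi

/-- Interval addition. -/
def SI.add (a b : SI) : SI := ⟨a.lo + b.lo, a.hi + b.hi, add_le_add a.isle b.isle⟩

/-- Interval multiplication. -/
def SI.mul (a b : SI) : SI := ⟨a.lo * b.lo, a.hi * b.hi, mul_le_mul' a.isle b.isle⟩

/-- Interval join. -/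
def SI.join (a b : SI) : SI := ⟨a.lo ⊔ b.lo, a.hi ⊔ b.hi, sup_le_sup a.isle b.isle⟩

/-- Precision on gradual sensitivities: interval inclusion. -/
def SI.prec (a b : SI) : Prop := b.lo ≤ a.lo ∧ a.hi ≤ b.hi

/-- Consistent sensitivity ordering: `[s₁,s₂] ⪅ [s₃,s₄]` iff `s₁ ≤ s₄`. -/
def SI.cle (a b : SI) : Prop := a.lo ≤ b.hi

/-- A gradual sensitivity is bounded if it does not contain ∞. -/
def SI.bounded (a : SI) : Prop := a.hi ≠ ⊤

/-- A gradual sensitivity is static (fully precise) if it is a singleton. -/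
def SI.static (a : SI) : Prop := a.lo = a.hi

/-- The zero sensitivity. -/
def SI.zero : SI := ⟨0, 0, le_rfl⟩

/-- The infinite sensitivity. -/
def SI.inf : SI := ⟨⊤, ⊤, le_rfl⟩

/-- The unknown sensitivity `? = [0,∞]`. -/
def SI.unknown : SI := ⟨0, ⊤, le_top⟩

/-! ## Gradual sensitivity environments -/

/-- A gradual sensitivity environment: a map from distance variables to
gradual sensitivities. -/
abbrev GEnv := String → SI

/-- Pointwise addition of sensitivity environments. -/
def addE (S1 S2 : GEnv) : GEnv := fun x => (S1 x).add (S2 x)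

/-- Scaling of a sensitivity environment by a gradual sensitivity. -/
def scaleE (g : SI) (S : GEnv) : GEnv := fun x => g.mul (S x)

/-- The empty sensitivity environment ∅. -/
def zeroE : GEnv := fun _ => SI.zero

/-- Pointwise precision of sensitivity environments. -/
def precE (S1 S2 : GEnv) : Prop := ∀ x, (S1 x).prec (S2 x)

/-- A sensitivity environment is bounded if no interval contains ∞. -/
def boundedE (S : GEnv) : Prop := ∀ x, (S x).bounded

/-- Substitution [Sr/r]S of a sensitivity environment for a distance
variable in a sensitivity environment. -/
def substDVE (r : String) (Sr : GEnv) (S : GEnv) : GEnv :=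
  fun y => (if y = r then SI.zero else S y).add ((S r).mul (Sr y))

/-! ## GS types -/

/-- GS types g; `arrow g₁ S₁ g₂ S₂` is the function type g₁^{S₁} → g₂^{S₂};
`all r g S` is the distance abstraction type ∀r. g^{S}. -/
inductive GTy where
  | base : BaseTy → GTy
  | arrow : GTy → GEnv → GTy → GEnv → GTy
  | all : String → GTy → GEnv → GTy

/-- Sensitivity types T = g^Σ. -/
abbrev CTy := GTy × GEnv

/-- Substitution [Sr/r] of a sensitivity environment for a distance variable
in a type (recursively in all nested sensitivity environments, respecting
the ∀-binder). -/
def substT (r : String) (Sr : GEnv) : GTy → GTy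
  | .base B => .base B
  | .arrow g1 S1 g2 S2 =>
      .arrow (substT r Sr g1) (substDVE r Sr S1) (substT r Sr g2) (substDVE r Sr S2)
  | .all r' g S =>
      if r' = r then .all r' g S
      else .all r' (substT r Sr g) (substDVE r Sr S)

/-- Size of a type (used for termination of the logical relations). -/
def GTy.size : GTy → ℕ
  | .base _ => 1
  | .arrow g1 _ g2 _ => g1.size + g2.size + 1
  | .all _ g _ => g.size + 1

theorem size_substT (r : String) (Sr : GEnv) (g : GTy) :
    (substT r Sr g).size = g.size := by
  induction g with
  | base B => rfl
  | arrow g1 S1 g2 S2 ih1 ih2 => simp [substT, GTy.size, ih1, ih2]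
  | all r' g S ih => by_cases h : r' = r <;> simp [substT, h, GTy.size, ih]

/-- Precision on GS types (covariant everywhere). -/
inductive TyPrec : GTy → GTy → Prop
  | base : TyPrec (.base B) (.base B)
  | arrow : TyPrec g1 g1' → precE S1 S1' → TyPrec g2 g2' → precE S2 S2' →
      TyPrec (.arrow g1 S1 g2 S2) (.arrow g1' S1' g2' S2')
  | all : TyPrec g g' → precE S S' →
      TyPrec (.all r g S) (.all r g' S')

/-- Precision on sensitivity types. -/
def CTyPrec (T T' : CTy) : Prop := TyPrec T.1 T'.1 ∧ precE T.2 T'.2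

/-! ## Evidence, interior and consistent transitivity -/

/-- An evidence for a consistent subtyping judgment: a pair of sensitivity
types. -/
abbrev Ev := CTy × CTy

/-- Evidence precision ⊑² (componentwise precision). -/
def EvPrec (ε ε' : Ev) : Prop := CTyPrec ε.1 ε'.1 ∧ CTyPrec ε.2 ε'.2

/-- Interior of two sensitivity environments (pointwise interior of the
consistent sensitivity ordering). -/
def interE (S1 S2 : GEnv) : Option (GEnv × GEnv) :=
  if h : ∀ x, (S1 x).lo ≤ (S2 x).hi then
    some (fun x => ⟨(S1 x).lo, (S1 x).hi ⊓ (S2 x).hi, le_inf (S1 x).isle (h x)⟩,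
          fun x => ⟨(S1 x).lo ⊔ (S2 x).lo, (S2 x).hi, sup_le (h x) (S2 x).isle⟩)
  else none

/-- Interior of two GS types (evidence for a consistent subtyping judgment,
contravariant in function domains). -/
def interT : GTy → GTy → Option (GTy × GTy)
  | .base B1, .base B2 => if B1 = B2 then some (.base B1, .base B2) else none
  | .arrow a1 sa1 b1 sb1, .arrow a2 sa2 b2 sb2 => do
      let (a2', a1') ← interT a2 a1
      let (sa2', sa1') ← interE sa2 sa1
      let (b1', b2') ← interT b1 b2
      let (sb1', sb2') ← interE sb1 sb2
      pure (.arrow a1' sa1' b1' sb1', .arrow a2' sa2' b2' sb2')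
  | .all r1 g1 s1, .all r2 g2 s2 =>
      if r1 = r2 then do
        let (g1', g2') ← interT g1 g2
        let (s1', s2') ← interE s1 s2
        pure (.all r1 g1' s1', .all r2 g2' s2')
      else none
  | _, _ => none
termination_by t1 t2 => t1.size + t2.size
decreasing_by all_goals simp [GTy.size] <;> omega

/-- Interior of two sensitivity types: the initial evidence for their
consistent subtyping judgment. -/
def interC (T1 T2 : CTy) : Option Ev := do
  let (g1, g2) ← interT T1.1 T2.1
  let (s1, s2) ← interE T1.2 T2.2
  pure ((g1, s1), (g2, s2))

/-- Consistent transitivity on (pointwise) sensitivity environments: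
combines evidences ⟨s1,s2⟩ and ⟨s3,s4⟩. -/
def ctrE (s1 s2 s3 s4 : GEnv) : Option (GEnv × GEnv) :=
  if h : ∀ x, (s1 x).lo ≤ (s1 x).hi ⊓ (s2 x).hi ⊓ (s3 x).hi ∧
              (s2 x).lo ⊔ (s3 x).lo ⊔ (s4 x).lo ≤ (s4 x).hi then
    some (fun x => ⟨(s1 x).lo, (s1 x).hi ⊓ (s2 x).hi ⊓ (s3 x).hi, (h x).1⟩,
          fun x => ⟨(s2 x).lo ⊔ (s3 x).lo ⊔ (s4 x).lo, (s4 x).hi, (h x).2⟩)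
  else none

/-- Consistent transitivity on GS types: combines evidences ⟨t1,t2⟩ and
⟨t3,t4⟩ (contravariant in function domains). -/
def ctrT : GTy → GTy → GTy → GTy → Option (GTy × GTy)
  | .base B1, .base B2, .base B3, .base B4 =>
      if B1 = B2 ∧ B2 = B3 ∧ B3 = B4 then some (.base B1, .base B4) else none
  | .arrow a1 sa1 b1 sb1, .arrow a2 sa2 b2 sb2,
    .arrow a3 sa3 b3 sb3, .arrow a4 sa4 b4 sb4 => do
      let (a4', a1') ← ctrT a4 a3 a2 a1
      let (sa4', sa1') ← ctrE sa4 sa3 sa2 sa1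
      let (b1', b4') ← ctrT b1 b2 b3 b4
      let (sb1', sb4') ← ctrE sb1 sb2 sb3 sb4
      pure (.arrow a1' sa1' b1' sb1', .arrow a4' sa4' b4' sb4')
  | .all r1 g1 s1, .all r2 g2 s2, .all r3 g3 s3, .all r4 g4 s4 =>
      if r1 = r2 ∧ r2 = r3 ∧ r3 = r4 then do
        let (g1', g4') ← ctrT g1 g2 g3 g4
        let (s1', s4') ← ctrE s1 s2 s3 s4
        pure (.all r1 g1' s1', .all r4 g4' s4')
      else none
  | _, _, _, _ => none
termination_by t1 t2 t3 t4 => t1.size + t2.size + t3.size + t4.size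
decreasing_by all_goals simp [GTy.size] <;> omega

/-- Consistent transitivity on evidences: ε₁ ∘ ε₂, undefined when transitivity
is refuted. -/
def ctrC (e1 e2 : Ev) : Option Ev := do
  let (g1, g4) ← ctrT e1.1.1 e1.2.1 e2.1.1 e2.2.1
  let (s1, s4) ← ctrE e1.1.2 e1.2.2 e2.1.2 e2.2.2
  pure ((g1, s1), (g4, s4))

/-! ## GSCheck: the internal evidence language -/

/-- GSCheck expressions: ascriptions `ascr ε e T` carry an evidence ε and an
ascribed sensitivity type T; `err` is the runtime error term. -/
inductive CExpr where
  | const : Const → CExpr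
  | op : Op → CExpr → CExpr → CExpr
  | var : String → CExpr
  | lam : String → CTy → CExpr → CExpr
  | app : CExpr → CExpr → CExpr
  | tlam : String → CExpr → CExpr
  | tapp : CExpr → GEnv → CExpr
  | ascr : Ev → CExpr → CTy → CExpr
  | err : CExpr

mutual
/-- Simple values u ::= c | λ(x:T).e | Λr.v. -/
inductive Simple : CExpr → Prop
  | const : Simple (.const c)
  | lam : Simple (.lam x T e)
  | tlam : IsVal v → Simple (.tlam r v)
/-- Values v ::= ε u :: T. -/
inductive IsVal : CExpr → Prop
  | mk : Simple u → IsVal (.ascr ε u T)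
end

/-- Term substitution. -/
def csubst (x : String) (v : CExpr) : CExpr → CExpr
  | .const c => .const c
  | .op o a b => .op o (csubst x v a) (csubst x v b)
  | .var y => if y = x then v else .var y
  | .lam y T e => if y = x then .lam y T e else .lam y T (csubst x v e)
  | .app a b => .app (csubst x v a) (csubst x v b)
  | .tlam r e => .tlam r (csubst x v e)
  | .tapp e S => .tapp (csubst x v e) S
  | .ascr ε e T => .ascr ε (csubst x v e) T
  | .err => .err

/-- Substitution of a distance variable in a sensitivity type. -/
def substCTy (r : String) (Sr : GEnv) (T : CTy) : CTy :=
  (substT r Sr T.1, substDVE r Sr T.2)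

/-- Substitution of a distance variable in an evidence. -/
def substEv (r : String) (Sr : GEnv) (ε : Ev) : Ev :=
  (substCTy r Sr ε.1, substCTy r Sr ε.2)

/-- Substitution of a distance variable in a GSCheck expression. -/
def dsubst (r : String) (Sr : GEnv) : CExpr → CExpr
  | .const c => .const c
  | .op o a b => .op o (dsubst r Sr a) (dsubst r Sr b)
  | .var y => .var y
  | .lam y T e => .lam y (substCTy r Sr T) (dsubst r Sr e)
  | .app a b => .app (dsubst r Sr a) (dsubst r Sr b)
  | .tlam r' e => if r' = r then .tlam r' e else .tlam r' (dsubst r Sr e)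
  | .tapp e S => .tapp (dsubst r Sr e) (substDVE r Sr S)
  | .ascr ε e T => .ascr (substEv r Sr ε) (dsubst r Sr e) (substCTy r Sr T)
  | .err => .err

/-- Denotation of the primitive operations. -/
def opDenote : Op → Const → Const → Option Const
  | .add, .r a, .r b => some (.r (a + b))
  | .mul, .r a, .r b => some (.r (a * b))
  | .le, .r a, .r b => some (.b (if a ≤ b then true else false))
  | _, _, _ => none

/-- Sensitivity typing of the primitive operations: addition adds the
sensitivity environments; multiplication and comparison scale by ∞. -/
def opCTy : Op → CTy → CTy → Option CTy
  | .add, (.base .real, S1), (.base .real, S2) => some (.base .real, addE S1 S2)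
  | .mul, (.base .real, S1), (.base .real, S2) =>
      some (.base .real, scaleE SI.inf (addE S1 S2))
  | .le, (.base .real, S1), (.base .real, S2) =>
      some (.base .bool, scaleE SI.inf (addE S1 S2))
  | _, _, _ => none

/-- Lifting of operation typing to evidences. -/
def opEv (o : Op) (ε1 ε2 : Ev) : Option Ev := do
  let a ← opCTy o ε1.1 ε2.1
  let b ← opCTy o ε1.2 ε2.2
  pure (a, b)

/-- Domain of a function sensitivity type. -/
def domC : CTy → Option CTy
  | (.arrow g1 S1 _ _, _) => some (g1, S1)
  | _ => none

/-- Codomain of a function sensitivity type (adding the function's own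
top-level sensitivity environment). -/
def codC : CTy → Option CTy
  | (.arrow _ _ g2 S2, S) => some (g2, addE S2 S)
  | _ => none

/-- Instantiation of a distance-abstraction sensitivity type. -/
def instC (T : CTy) (Sr : GEnv) : Option CTy :=
  match T with
  | (.all r g Sg, S) => some (substT r Sr g, addE (substDVE r Sr Sg) S)
  | _ => none

/-- Inversion of an evidence for the domain (contravariant). -/
def domEv (ε : Ev) : Option Ev := do
  let d2 ← domC ε.2
  let d1 ← domC ε.1
  pure (d2, d1)

/-- Inversion of an evidence for the codomain. -/
def codEv (ε : Ev) : Option Ev := do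
  let c1 ← codC ε.1
  let c2 ← codC ε.2
  pure (c1, c2)

/-- Inversion of an evidence for instantiation. -/
def instEv (ε : Ev) (Sr : GEnv) : Option Ev := do
  let i1 ← instC ε.1 Sr
  let i2 ← instC ε.2 Sr
  pure (i1, i2)

/-- Reduction of GSCheck (the notions of reduction of Figure 6 together with
the congruence closure under evaluation contexts and error propagation). -/
inductive Step : CExpr → CExpr → Prop
  | op : opDenote o c1 c2 = some c → opEv o ε1 ε2 = some ε → opCTy o T1 T2 = some T →
      Step (.op o (.ascr ε1 (.const c1) T1) (.ascr ε2 (.const c2) T2))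
           (.ascr ε (.const c) T)
  | appOk : Simple u → domEv ε = some εd → ctrC ε1 εd = some ε' →
      codEv ε = some εc → codC T = some Tc →
      Step (.app (.ascr ε (.lam x T1' eb) T) (.ascr ε1 u T1))
           (.ascr εc (csubst x (.ascr ε' u T1') eb) Tc)
  | appErr : Simple u → domEv ε = some εd → ctrC ε1 εd = none →
      Step (.app (.ascr ε (.lam x T1' eb) T) (.ascr ε1 u T1)) .err
  | inst : IsVal v → instEv ε Sr = some ε' → instC T Sr = some T' →
      Step (.tapp (.ascr ε (.tlam r v) T) Sr) (.ascr ε' (dsubst r Sr v) T')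
  | ascrOk : Simple u → ctrC ε' ε = some ε'' →
      Step (.ascr ε (.ascr ε' u T') T) (.ascr ε'' u T)
  | ascrErr : Simple u → ctrC ε' ε = none →
      Step (.ascr ε (.ascr ε' u T') T) .err
  -- congruence (evaluation contexts)
  | opL : Step e1 e1' → Step (.op o e1 e2) (.op o e1' e2)
  | opR : IsVal v → Step e2 e2' → Step (.op o v e2) (.op o v e2')
  | appL : Step e1 e1' → Step (.app e1 e2) (.app e1' e2)
  | appR : IsVal v → Step e2 e2' → Step (.app v e2) (.app v e2')
  | tappC : Step e e' → Step (.tapp e S) (.tapp e' S)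
  | tlamC : Step e e' → Step (.tlam r e) (.tlam r e')
  | ascrC : Step e e' → Step (.ascr ε e T) (.ascr ε e' T)
  -- error propagation
  | opLErr : Step (.op o .err e2) .err
  | opRErr : IsVal v → Step (.op o v .err) .err
  | appLErr : Step (.app .err e2) .err
  | appRErr : IsVal v → Step (.app v .err) .err
  | tappErr : Step (.tapp .err S) .err
  | tlamErr : Step (.tlam r .err) .err
  | ascrErrP : Step (.ascr ε .err T) .err

/-- Zero or more reduction steps. -/
def Steps : CExpr → CExpr → Prop := Relation.ReflTransGen Step

/-- e ⇓ v : e reduces to the value v. -/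
def EvalsTo (e v : CExpr) : Prop := Steps e v ∧ IsVal v

/-- e ⇓ error. -/
def EvalsErr (e : CExpr) : Prop := Steps e .err

/-- Applying a substitution γ (a value environment) to a GSCheck expression. -/
def cmsubst (γ : String → CExpr) : CExpr → CExpr
  | .const c => .const c
  | .op o a b => .op o (cmsubst γ a) (cmsubst γ b)
  | .var y => γ y
  | .lam y T e => .lam y T (cmsubst (Function.update γ y (.var y)) e)
  | .app a b => .app (cmsubst γ a) (cmsubst γ b)
  | .tlam r e => .tlam r (cmsubst γ e)
  | .tapp e S => .tapp (cmsubst γ e) S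
  | .ascr ε e T => .ascr ε (cmsubst γ e) T
  | .err => .err

/-! ## Monitors, distances, canonical forms -/

/-- The monitor of a value: its evidence. -/
def monOf : CExpr → Option Ev
  | .ascr ε _ _ => some ε
  | _ => none

/-- The monitored sensitivity of a value: the static environment of lower
bounds of the sensitivity environment of the right-hand component of its
evidence. -/
def msOf : CExpr → String → ENNReal
  | .ascr (_, (_, S')) _ _ => fun r => (S' r).lo
  | _ => fun _ => 0

/-- Equi-precise monitors (each is more precise than the other). -/
def EquiEv (v1 v2 : CExpr) : Prop :=
  ∃ ε1 ε2, monOf v1 = some ε1 ∧ monOf v2 = some ε2 ∧ EvPrec ε1 ε2 ∧ EvPrec ε2 ε1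

/-- Canonical forms of a base type. -/
def CanonC (B : BaseTy) (v : CExpr) : Prop :=
  match B, v with
  | .real, .ascr _ (.const (.r _)) _ => True
  | .bool, .ascr _ (.const (.b _)) _ => True
  | _, _ => False

/-- The metric d_B on canonical forms of base types. -/
def dBC (B : BaseTy) (v1 v2 : CExpr) : ENNReal :=
  match B, v1, v2 with
  | .real, .ascr _ (.const (.r a)) _, .ascr _ (.const (.r b)) _ =>
      ENNReal.ofReal |a - b|
  | .bool, .ascr _ (.const (.b a)) _, .ascr _ (.const (.b b)) _ =>
      if a = b then 0 else ⊤
  | _, _, _ => ⊤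

/-- Distance environments: maps from distance variables to distances. -/
abbrev DEnv := String → ENNReal

/-- A distance environment is bounded if it avoids ∞. -/
def boundedD (dl : DEnv) : Prop := ∀ r, dl r ≠ ⊤

/-- Σ·δ for a static (fully precise) sensitivity environment Σ. -/
def dot (S : String → ENNReal) (dl : DEnv) : ENNReal := ∑' r, S r * dl r

/-- A static environment Σ' is (pointwise) within the gradual environment Σ,
i.e. Σ' is a static environment more precise than Σ. -/
def staticPrec (S' : String → ENNReal) (S : GEnv) : Prop :=
  ∀ r, (S r).lo ≤ S' r ∧ S' r ≤ (S r).hi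

/-! ## Logical relations (Figure 4): termination-insensitive -/

/-- Value logical relation (v₁,v₂) ∈ V_δ⟦g^Σ⟧ (Figure 4); the computation
relation E is inlined in the arrow and ∀ cases. -/
def Vrel (dl : DEnv) : GTy → GEnv → CExpr → CExpr → Prop
  | .base B, _, v1, v2 =>
      CanonC B v1 ∧ CanonC B v2 ∧
      dBC B v1 v2 ≤ dot (fun r => msOf v1 r ⊔ msOf v2 r) dl
  | .arrow g1 S1 g2 S2, S, v1, v2 =>
      IsVal v1 ∧ IsVal v2 ∧
      ∀ v1' v2', Vrel dl g1 S1 v1' v2' →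
        ∀ w1 w2, EvalsTo (.app v1 v1') w1 → EvalsTo (.app v2 v2') w2 →
          Vrel dl g2 (addE S2 S) w1 w2
  | .all r g Sg, S, v1, v2 =>
      IsVal v1 ∧ IsVal v2 ∧
      ∀ Sr, ∀ w1 w2, EvalsTo (.tapp v1 Sr) w1 → EvalsTo (.tapp v2 Sr) w2 →
        Vrel dl (substT r Sr g) (addE (substDVE r Sr Sg) S) w1 w2
termination_by g _ _ _ => g.size
decreasing_by all_goals simp [GTy.size, size_substT] <;> omega

/-- Computation logical relation (e₁,e₂) ∈ E_δ⟦g^Σ⟧. -/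
def Erel (dl : DEnv) (g : GTy) (S : GEnv) (e1 e2 : CExpr) : Prop :=
  ∀ v1 v2, EvalsTo e1 v1 → EvalsTo e2 v2 → Vrel dl g S v1 v2

/-- Type environments. -/
abbrev GTEnv := String → Option CTy

/-- Related substitutions (γ₁,γ₂) ∈ G_δ⟦Γ⟧. -/
def Grel (dl : DEnv) (Γ : GTEnv) (γ1 γ2 : String → CExpr) : Prop :=
  ∀ x T, Γ x = some T → Vrel dl T.1 T.2 (γ1 x) (γ2 x)

/-- Semantic gradual sensitivity typing Γ ⊨ e : T. -/
def SemGTy (Γ : GTEnv) (e : CExpr) (T : CTy) : Prop :=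
  ∀ dl γ1 γ2, Grel dl Γ γ1 γ2 → Erel dl T.1 T.2 (cmsubst γ1 e) (cmsubst γ2 e)

/-! ## Logical relations (Figure 5): termination-sensitive -/

/-- Termination-sensitive value logical relation (v₁,v₂) ∈ Vᵗˢ_δ⟦g^Σ⟧
(Figure 5); the computation relation Eᵗˢ is inlined in the arrow and ∀
cases. -/
def VrelTS (dl : DEnv) : GTy → GEnv → CExpr → CExpr → Prop
  | .base B, _, v1, v2 =>
      EquiEv v1 v2 ∧ CanonC B v1 ∧ CanonC B v2 ∧
      dBC B v1 v2 ≤ dot (fun r => msOf v1 r ⊔ msOf v2 r) dl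
  | .arrow g1 S1 g2 S2, S, v1, v2 =>
      EquiEv v1 v2 ∧ IsVal v1 ∧ IsVal v2 ∧
      ∀ v1' v2', VrelTS dl g1 S1 v1' v2' →
        ∀ w1, EvalsTo (.app v1 v1') w1 →
          ∃ w2, EvalsTo (.app v2 v2') w2 ∧ VrelTS dl g2 (addE S2 S) w1 w2
  | .all r g Sg, S, v1, v2 =>
      EquiEv v1 v2 ∧ IsVal v1 ∧ IsVal v2 ∧
      ∀ Sr, boundedE Sr →
        ∀ w1, EvalsTo (.tapp v1 Sr) w1 →
          ∃ w2, EvalsTo (.tapp v2 Sr) w2 ∧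
            VrelTS dl (substT r Sr g) (addE (substDVE r Sr Sg) S) w1 w2
termination_by g _ _ _ => g.size
decreasing_by all_goals simp [GTy.size, size_substT] <;> omega

/-- Termination-sensitive computation logical relation. -/
def ErelTS (dl : DEnv) (g : GTy) (S : GEnv) (e1 e2 : CExpr) : Prop :=
  ∀ v1, EvalsTo e1 v1 → ∃ v2, EvalsTo e2 v2 ∧ VrelTS dl g S v1 v2

/-- Termination-sensitive related substitutions (γ₁,γ₂) ∈ Gᵗˢ_δ⟦Γ⟧ (requires
a bounded distance environment). -/
def GrelTS (dl : DEnv) (Γ : GTEnv) (γ1 γ2 : String → CExpr) : Prop :=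
  boundedD dl ∧ ∀ x T, Γ x = some T → VrelTS dl T.1 T.2 (γ1 x) (γ2 x)

/-- Termination-sensitive semantic gradual sensitivity typing Γ ⊨ᵗˢ e : g^Σ
(requires the top-level sensitivity environment to be bounded). -/
def SemGTyTS (Γ : GTEnv) (e : CExpr) (T : CTy) : Prop :=
  boundedE T.2 ∧
  ∀ dl γ1 γ2, GrelTS dl Γ γ1 γ2 → ErelTS dl T.1 T.2 (cmsubst γ1 e) (cmsubst γ2 e)

/-! ## Gradual metric preservation -/

/-- δ-proximity of two substitutions for a base-type environment Γ:
values are canonical forms at bounded distance as measured by the join of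
their monitored sensitivities. -/
def Proximate (dl : DEnv) (Γ : GTEnv) (γ1 γ2 : String → CExpr) : Prop :=
  ∀ x B S, Γ x = some (.base B, S) →
    CanonC B (γ1 x) ∧ CanonC B (γ2 x) ∧
    dBC B (γ1 x) (γ2 x) ≤ dot (fun r => msOf (γ1 x) r ⊔ msOf (γ2 x) r) dl

/-- Termination-sensitive δ-proximity: additionally δ is bounded and
corresponding values carry equi-precise evidences. -/
def ProximateTS (dl : DEnv) (Γ : GTEnv) (γ1 γ2 : String → CExpr) : Prop :=
  boundedD dl ∧
  ∀ x B S, Γ x = some (.base B, S) →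
    EquiEv (γ1 x) (γ2 x) ∧ CanonC B (γ1 x) ∧ CanonC B (γ2 x) ∧
    dBC B (γ1 x) (γ2 x) ≤ dot (fun r => msOf (γ1 x) r ⊔ msOf (γ2 x) r) dl

/-- Gradual metric preservation GMP(Γ, e, B, Σ). -/
def GMP (Γ : GTEnv) (e : CExpr) (B : BaseTy) (S : GEnv) : Prop :=
  ∀ dl γ1 γ2, Proximate dl Γ γ1 γ2 →
    ∀ v1 v2, EvalsTo (cmsubst γ1 e) v1 → EvalsTo (cmsubst γ2 e) v2 →
      ∃ S' : String → ENNReal, staticPrec S' S ∧ dBC B v1 v2 ≤ dot S' dl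

/-- Termination-sensitive gradual metric preservation GMPᵗˢ(Γ, e, B, Σ). -/
def GMPts (Γ : GTEnv) (e : CExpr) (B : BaseTy) (S : GEnv) : Prop :=
  ∀ dl γ1 γ2, ProximateTS dl Γ γ1 γ2 →
    ∀ v1, EvalsTo (cmsubst γ1 e) v1 →
      ∃ v2, EvalsTo (cmsubst γ2 e) v2 ∧
        ∃ S' : String → ENNReal, staticPrec S' S ∧ dBC B v1 v2 ≤ dot S' dl

/-! ## The source language GS and type-directed elaboration (Figure 7) -/

/-- GS source expressions. -/
inductive GExpr where
  | const : Const → GExpr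
  | op : Op → GExpr → GExpr → GExpr
  | var : String → GExpr
  | lam : String → CTy → GExpr → GExpr
  | app : GExpr → GExpr → GExpr
  | tlam : String → GExpr → GExpr
  | tapp : GExpr → GEnv → GExpr
  | ascr : GExpr → CTy → GExpr

/-- The base type of a constant. -/
def constBTy : Const → BaseTy
  | .r _ => .real
  | .b _ => .bool

/-- Type-directed elaboration Γ ⊢ e ⇝ e' : T from GS to GSCheck (Figure 7);
it doubles as the syntactic type system of GS. -/
inductive Elab : GTEnv → GExpr → CExpr → CTy → Prop
  | const : interC (.base (constBTy c), zeroE) (.base (constBTy c), zeroE) = some ε →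
      Elab Γ (.const c) (.ascr ε (.const c) (.base (constBTy c), zeroE))
        (.base (constBTy c), zeroE)
  | op : Elab Γ a a' Ta → Elab Γ b b' Tb → opCTy o Ta Tb = some T →
      Elab Γ (.op o a b) (.op o a' b') T
  | var : Γ x = some T → Elab Γ (.var x) (.var x) T
  | lam : Elab (Function.update Γ x (some T1)) e e' T2 →
      interC (.arrow T1.1 T1.2 T2.1 T2.2, zeroE) (.arrow T1.1 T1.2 T2.1 T2.2, zeroE)
        = some ε →
      Elab Γ (.lam x T1 e)
        (.ascr ε (.lam x T1 e') (.arrow T1.1 T1.2 T2.1 T2.2, zeroE))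
        (.arrow T1.1 T1.2 T2.1 T2.2, zeroE)
  | app : Elab Γ a a' Ta → Elab Γ b b' Tb →
      domC Ta = some Td → interC Tb Td = some ε2 → codC Ta = some Tc →
      Elab Γ (.app a b) (.app a' (.ascr ε2 b' Td)) Tc
  | tlam : Elab Γ e e' T →
      interC (.all r T.1 T.2, zeroE) (.all r T.1 T.2, zeroE) = some ε →
      Elab Γ (.tlam r e) (.ascr ε (.tlam r e') (.all r T.1 T.2, zeroE))
        (.all r T.1 T.2, zeroE)
  | tapp : Elab Γ e e' T → instC T Sr = some T' →
      Elab Γ (.tapp e Sr) (.tapp e' Sr) T'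
  | ascr : Elab Γ e e' T → interC T T' = some ε →
      Elab Γ (.ascr e T') (.ascr ε e' T') T'

/-- The empty type environment. -/
def emptyEnv : GTEnv := fun _ => none

/-! ## Precision on expressions -/

/-- Precision on GS source expressions (the natural syntactic lifting of type
precision to terms). -/
inductive GPrec : GExpr → GExpr → Prop
  | const : GPrec (.const c) (.const c)
  | op : GPrec a a' → GPrec b b' → GPrec (.op o a b) (.op o a' b')
  | var : GPrec (.var x) (.var x)
  | lam : CTyPrec T T' → GPrec e e' → GPrec (.lam x T e) (.lam x T' e')
  | app : GPrec a a' → GPrec b b' → GPrec (.app a b) (.app a' b')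
  | tlam : GPrec e e' → GPrec (.tlam r e) (.tlam r e')
  | tapp : GPrec e e' → precE S S' → GPrec (.tapp e S) (.tapp e' S')
  | ascr : GPrec e e' → CTyPrec T T' → GPrec (.ascr e T) (.ascr e' T')

/-- Precision on GSCheck expressions (including evidences). -/
inductive CPrec : CExpr → CExpr → Prop
  | const : CPrec (.const c) (.const c)
  | op : CPrec a a' → CPrec b b' → CPrec (.op o a b) (.op o a' b')
  | var : CPrec (.var x) (.var x)
  | lam : CTyPrec T T' → CPrec e e' → CPrec (.lam x T e) (.lam x T' e')
  | app : CPrec a a' → CPrec b b' → CPrec (.app a b) (.app a' b')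
  | tlam : CPrec e e' → CPrec (.tlam r e) (.tlam r e')
  | tapp : CPrec e e' → precE S S' → CPrec (.tapp e S) (.tapp e' S')
  | ascr : EvPrec ε ε' → CPrec e e' → CTyPrec T T' →
      CPrec (.ascr ε e T) (.ascr ε' e' T')
  | err : CPrec .err .err

end GS

/-!
Evaluation in GSCheck always terminates because sensitivity annotations never steer control
flow: they only decide whether a consistent-transitivity check succeeds, and a failed check
steps to `error`. Termination is therefore proved with a Tait-style logical predicate indexed by
the *skeleton* of a type, the simple type left after forgetting all sensitivities. A value is
good at an arrow skeleton if applying it to good arguments reduces to a good value or to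
`error`. Distance instantiation rewrites the sensitivity annotations inside a body, so the
predicate is stated for every body that agrees with the original one up to annotations of the
same skeleton. The fundamental lemma then shows that every closed instance of an elaborated
term, with its free variables replaced by good values, is safe.
-/

namespace GS

inductive Sk where
  | base : BaseTy → Sk
  | arrow : Sk → Sk → Sk
  | all : Sk → Sk

def skel : GTy → Sk
  | .base B => .base B
  | .arrow g1 _ g2 _ => .arrow (skel g1) (skel g2)
  | .all _ g _ => .all (skel g)

@[simp]
theorem skel_substT (r : String) (Sr : GEnv) (g : GTy) : skel (substT r Sr g) = skel g := by
  induction g <;> grind [substT, skel]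

theorem skel_eq_base {g : GTy} {B : BaseTy} (h : skel g = .base B) : g = .base B := by
  cases g <;> simp_all [skel]

theorem skel_eq_arrow {g : GTy} {s1 s2 : Sk} (h : skel g = .arrow s1 s2) :
    ∃ a sa b sb, g = .arrow a sa b sb ∧ skel a = s1 ∧ skel b = s2 := by
  cases g <;> simp_all [skel]

theorem skel_eq_all {g : GTy} {s : Sk} (h : skel g = .all s) :
    ∃ r g' S, g = .all r g' S ∧ skel g' = s := by
  cases g <;> simp_all [skel]

theorem interT_skel {g1 g2 : GTy} {p : GTy × GTy} (h : interT g1 g2 = some p) :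
    skel g2 = skel g1 ∧ skel p.1 = skel g1 ∧ skel p.2 = skel g1 := by
  fun_induction interT g1 g2 generalizing p <;> simp_all [skel, Option.bind_eq_some_iff] <;>
    grind [skel]

theorem ctrT_skel {g1 g2 g3 g4 : GTy} {p : GTy × GTy} (h : ctrT g1 g2 g3 g4 = some p) :
    skel g2 = skel g1 ∧ skel g3 = skel g1 ∧ skel g4 = skel g1 ∧
      skel p.1 = skel g1 ∧ skel p.2 = skel g1 := by
  fun_induction ctrT g1 g2 g3 g4 generalizing p <;> simp_all [skel, Option.bind_eq_some_iff] <;>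
    grind [skel]

theorem interC_skel {T1 T2 : CTy} {ε : Ev} (h : interC T1 T2 = some ε) :
    skel T2.1 = skel T1.1 ∧ skel ε.1.1 = skel T1.1 ∧ skel ε.2.1 = skel T1.1 := by
  rcases hT : interT T1.1 T2.1 with _ | p <;> rcases hE : interE T1.2 T2.2 with _ | q <;>
    simp [interC, hT, hE] at h
  subst h
  exact interT_skel hT

theorem ctrC_skel {ε1 ε2 ε : Ev} (h : ctrC ε1 ε2 = some ε) :
    skel ε.1.1 = skel ε1.1.1 ∧ skel ε.2.1 = skel ε1.1.1 := by
  rcases hT : ctrT ε1.1.1 ε1.2.1 ε2.1.1 ε2.2.1 with _ | p <;>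
    rcases hE : ctrE ε1.1.2 ε1.2.2 ε2.1.2 ε2.2.2 with _ | q <;> simp [ctrC, hT, hE] at h
  subst h
  exact ⟨(ctrT_skel hT).2.2.2.1, (ctrT_skel hT).2.2.2.2⟩

def Op.resTy : Op → BaseTy
  | .le => .bool
  | _ => .real

theorem opCTy_skel {o : Op} {Ta Tb T : CTy} (h : opCTy o Ta Tb = some T) :
    skel Ta.1 = .base .real ∧ skel Tb.1 = .base .real ∧ skel T.1 = .base o.resTy := by
  unfold opCTy at h
  split at h <;> first | (cases h; simp [skel, Op.resTy]) | simp at h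

theorem skel_of_domC_of_codC {T Td Tc : CTy} (hd : domC T = some Td) (hc : codC T = some Tc) :
    skel T.1 = .arrow (skel Td.1) (skel Tc.1) := by
  obtain ⟨g, S⟩ := T
  cases g <;> simp [domC, codC] at hd hc
  subst hd hc
  rfl

theorem skel_of_instC {T T' : CTy} {Sr : GEnv} (h : instC T Sr = some T') :
    skel T.1 = .all (skel T'.1) := by
  obtain ⟨g, S⟩ := T
  cases g <;> simp [instC] at h
  subst h
  simp [skel]

def fv : CExpr → Set String
  | .const _ => ∅
  | .op _ a b => fv a ∪ fv b
  | .var y => {y}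
  | .lam y _ e => fv e \ {y}
  | .app a b => fv a ∪ fv b
  | .tlam _ e => fv e
  | .tapp e _ => fv e
  | .ascr _ e _ => fv e
  | .err => ∅

theorem csubst_eq_self {x : String} {w : CExpr} (e : CExpr) (h : x ∉ fv e) :
    csubst x w e = e := by
  induction e <;> grind [csubst, fv]

theorem fv_csubst_subset (x : String) (w e : CExpr) : fv (csubst x w e) ⊆ fv e \ {x} ∪ fv w := by
  induction e <;> grind [csubst, fv]

inductive SkelEq : CExpr → CExpr → Prop
  | const : SkelEq (.const c) (.const c)
  | op : SkelEq a a' → SkelEq b b' → SkelEq (.op o a b) (.op o a' b')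
  | var : SkelEq (.var x) (.var x)
  | lam : skel T.1 = skel T'.1 → SkelEq e e' → SkelEq (.lam x T e) (.lam x T' e')
  | app : SkelEq a a' → SkelEq b b' → SkelEq (.app a b) (.app a' b')
  | tlam : SkelEq e e' → SkelEq (.tlam r e) (.tlam r e')
  | tapp : SkelEq e e' → SkelEq (.tapp e S) (.tapp e' S')
  | ascr : skel ε.1.1 = skel ε'.1.1 → skel ε.2.1 = skel ε'.2.1 → SkelEq e e' →
      skel T.1 = skel T'.1 → SkelEq (.ascr ε e T) (.ascr ε' e' T')
  | err : SkelEq .err .err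

namespace SkelEq

theorem refl (e : CExpr) : SkelEq e e := by
  induction e <;> constructor <;> first | rfl | assumption

theorem trans {e1 e2 e3 : CExpr} (h12 : SkelEq e1 e2) (h23 : SkelEq e2 e3) : SkelEq e1 e3 := by
  induction h12 generalizing e3 <;> cases h23 <;> constructor <;> grind

theorem fv_eq {e e' : CExpr} (h : SkelEq e e') : fv e = fv e' := by
  induction h <;> simp [fv, *]

end SkelEq

theorem skelEq_dsubst (r : String) (Sr : GEnv) (e : CExpr) : SkelEq (dsubst r Sr e) e := by
  induction e with
  | tlam r' e ih =>
    by_cases h : r' = r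
    · simp only [dsubst, h, if_true]; exact .tlam (.refl e)
    · simp only [dsubst, h, if_false]; exact .tlam ih
  | _ => constructor <;> simp_all [substEv, substCTy]

def AscrSkel (s : Sk) (ε : Ev) (T : CTy) : Prop :=
  skel ε.1.1 = s ∧ skel ε.2.1 = s ∧ skel T.1 = s

theorem AscrSkel.congr {s : Sk} {ε ε' : Ev} {T T' : CTy} (h : AscrSkel s ε T)
    (h1 : skel ε'.1.1 = skel ε.1.1) (h2 : skel ε'.2.1 = skel ε.2.1) (hT : skel T'.1 = skel T.1) :
    AscrSkel s ε' T' :=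
  ⟨h1.trans h.1, h2.trans h.2.1, hT.trans h.2.2⟩

theorem AscrSkel.of_ctrC {s : Sk} {ε1 ε2 ε : Ev} {T1 T : CTy} (h : AscrSkel s ε1 T1)
    (hc : ctrC ε1 ε2 = some ε) (hT : skel T.1 = s) : AscrSkel s ε T :=
  ⟨(ctrC_skel hc).1.trans h.1, (ctrC_skel hc).2.trans h.1, hT⟩

theorem AscrSkel.of_interC {T1 T2 : CTy} {ε : Ev} (h : interC T1 T2 = some ε) :
    AscrSkel (skel T1.1) ε T1 :=
  ⟨(interC_skel h).2.1, (interC_skel h).2.2, rfl⟩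

def GoodVal : Sk → CExpr → Prop
  | .base B, v => ∃ ε c T, v = .ascr ε (.const c) T ∧ AscrSkel (.base B) ε T ∧ constBTy c = B
  | .arrow s1 s2, v => ∃ ε x Tx eb T, v = .ascr ε (.lam x Tx eb) T ∧
      AscrSkel (.arrow s1 s2) ε T ∧ skel Tx.1 = s1 ∧ fv (.lam x Tx eb) = ∅ ∧
      ∀ eb', SkelEq eb' eb → ∀ w, GoodVal s1 w →
        ∃ r, Steps (csubst x w eb') r ∧ (r = .err ∨ GoodVal s2 r)
  | .all s, v => ∃ ε r vb T, v = .ascr ε (.tlam r vb) T ∧ AscrSkel (.all s) ε T ∧ GoodVal s vb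

def Safe (s : Sk) (e : CExpr) : Prop :=
  ∃ r, Steps e r ∧ (r = .err ∨ GoodVal s r)

namespace GoodVal

theorem isVal {s : Sk} {v : CExpr} (hg : GoodVal s v) : IsVal v := by
  induction s generalizing v with
  | base => obtain ⟨_, _, _, rfl, -⟩ := hg; exact .mk .const
  | arrow => obtain ⟨_, _, _, _, _, rfl, -⟩ := hg; exact .mk .lam
  | all _ ih => obtain ⟨_, _, _, _, rfl, -, hvb⟩ := hg; exact .mk (.tlam (ih hvb))

theorem fv_eq_empty {s : Sk} {v : CExpr} (hg : GoodVal s v) : fv v = ∅ := by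
  induction s generalizing v with
  | base => obtain ⟨_, _, _, rfl, -⟩ := hg; rfl
  | arrow => obtain ⟨_, _, _, _, _, rfl, -, -, hfv, -⟩ := hg; exact hfv
  | all _ ih => obtain ⟨_, _, vb, _, rfl, -, hvb⟩ := hg; exact ih (v := vb) hvb

theorem of_skelEq {s : Sk} {v v' : CExpr} (h : SkelEq v' v) (hg : GoodVal s v) :
    GoodVal s v' := by
  induction s generalizing v v' with
  | base =>
    obtain ⟨_, c, _, rfl, hs, hc⟩ := hg
    cases h with | ascr h1 h2 hu hT =>
    cases hu
    exact ⟨_, c, _, rfl, hs.congr h1 h2 hT, hc⟩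
  | arrow =>
    obtain ⟨_, x, _, _, _, rfl, hs, hTx, hfv, hbody⟩ := hg
    cases h with | ascr h1 h2 hu hT =>
    cases hu with | lam hTx' heb =>
    exact ⟨_, x, _, _, _, rfl, hs.congr h1 h2 hT, hTx'.trans hTx,
      (SkelEq.lam hTx' heb).fv_eq.trans hfv, fun eb h' => hbody eb (h'.trans heb)⟩
  | all _ ih =>
    obtain ⟨_, r, _, _, rfl, hs, hvb⟩ := hg
    cases h with | ascr h1 h2 hu hT =>
    cases hu with | tlam hvb' =>
    exact ⟨_, r, _, _, rfl, hs.congr h1 h2 hT, ih hvb' hvb⟩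

theorem reascribe {s : Sk} {ε1 ε2 ε : Ev} {u : CExpr} {T1 T : CTy}
    (hg : GoodVal s (.ascr ε1 u T1)) (hc : ctrC ε1 ε2 = some ε) (hT : skel T.1 = s) :
    GoodVal s (.ascr ε u T) := by
  cases s with
  | base =>
    obtain ⟨_, c, _, heq, hs, hc'⟩ := hg
    cases heq
    exact ⟨_, c, _, rfl, hs.of_ctrC hc hT, hc'⟩
  | arrow =>
    obtain ⟨_, x, _, _, _, heq, hs, hrest⟩ := hg
    cases heq
    exact ⟨_, x, _, _, _, rfl, hs.of_ctrC hc hT, hrest⟩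
  | all =>
    obtain ⟨_, r, _, _, heq, hs, hvb⟩ := hg
    cases heq
    exact ⟨_, r, _, _, rfl, hs.of_ctrC hc hT, hvb⟩

theorem safe {s : Sk} {v : CExpr} (hg : GoodVal s v) : Safe s v :=
  ⟨v, .refl, .inr hg⟩

theorem base_real {v : CExpr} (hg : GoodVal (.base .real) v) :
    ∃ (S1 S2 S3 : GEnv) (x : ℝ),
      v = .ascr ((.base .real, S1), (.base .real, S2)) (.const (.r x)) (.base .real, S3) := by
  obtain ⟨⟨⟨g1, S1⟩, g2, S2⟩, c, ⟨g3, S3⟩, rfl, ⟨h1, h2, h3⟩, hc⟩ := hg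
  obtain rfl := skel_eq_base h1
  obtain rfl := skel_eq_base h2
  obtain rfl := skel_eq_base h3
  cases c with
  | r x => exact ⟨S1, S2, S3, x, rfl⟩
  | b => cases hc

theorem exists_step_op (o : Op) {va vb : CExpr} (ha : GoodVal (.base .real) va)
    (hb : GoodVal (.base .real) vb) : ∃ v, Step (.op o va vb) v ∧ GoodVal (.base o.resTy) v := by
  obtain ⟨_, _, _, _, rfl⟩ := ha.base_real
  obtain ⟨_, _, _, _, rfl⟩ := hb.base_real
  cases o <;> exact ⟨_, .op rfl rfl rfl, _, _, _, rfl, ⟨rfl, rfl, rfl⟩, rfl⟩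

end GoodVal

namespace Safe

theorem of_steps_err {s : Sk} {e : CExpr} (h : Steps e .err) : Safe s e :=
  ⟨.err, h, .inl rfl⟩

theorem head {s : Sk} {e e' : CExpr} (h : Step e e') (he' : Safe s e') : Safe s e :=
  let ⟨r, hr, hres⟩ := he'
  ⟨r, .head h hr, hres⟩

theorem ctx {s s' : Sk} {e : CExpr} (C : CExpr → CExpr) (hC : ∀ a b, Step a b → Step (C a) (C b))
    (herr : Steps (C .err) .err) (he : Safe s e) (hk : ∀ v, GoodVal s v → Safe s' (C v)) :
    Safe s' (C e) := by
  obtain ⟨r, hr, rfl | hg⟩ := he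
  · exact of_steps_err ((Relation.ReflTransGen.lift C hC _ _ hr).trans herr)
  · obtain ⟨r', hr', hres⟩ := hk r hg
    exact ⟨r', (Relation.ReflTransGen.lift C hC _ _ hr).trans hr', hres⟩

theorem ascr {s : Sk} {e : CExpr} {ε : Ev} {T : CTy} (he : Safe s e) (hT : skel T.1 = s) :
    Safe s (.ascr ε e T) := by
  refine he.ctx (fun a => .ascr ε a T) (fun _ _ => .ascrC) (.single .ascrErrP) fun v hv => ?_
  obtain ⟨hu⟩ := hv.isVal
  cases hc : ctrC _ ε with
  | none => exact of_steps_err (.single (.ascrErr hu hc))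
  | some ε' => exact .head (.ascrOk hu hc) (hv.reascribe hc hT).safe

end Safe

theorem GoodVal.safe_app {s1 s2 : Sk} {vf va : CExpr} (hf : GoodVal (.arrow s1 s2) vf)
    (ha : GoodVal s1 va) : Safe s2 (.app vf va) := by
  obtain ⟨⟨⟨g1, S1⟩, g2, S2⟩, x, Tx, eb, ⟨gT, ST⟩, rfl, ⟨h1, h2, hT⟩, hTx, -, hbody⟩ := hf
  obtain ⟨a1, sa1, b1, sb1, rfl, -, -⟩ := skel_eq_arrow h1
  obtain ⟨a2, sa2, b2, sb2, rfl, -, -⟩ := skel_eq_arrow h2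
  obtain ⟨gd, Sd, gc, Sc, rfl, -, hgc⟩ := skel_eq_arrow hT
  obtain ⟨hu⟩ := ha.isVal
  cases hc : ctrC _ ((a2, sa2), (a1, sa1)) with
  | none => exact .of_steps_err (.single (.appErr hu rfl hc))
  | some ε =>
    have hbody' := hbody eb (.refl eb) _ (ha.reascribe hc hTx)
    exact .head (.appOk hu rfl hc rfl rfl) (Safe.ascr hbody' hgc)

theorem GoodVal.safe_tapp {s : Sk} {v : CExpr} (Sr : GEnv) (hg : GoodVal (.all s) v) :
    Safe s (.tapp v Sr) := by
  obtain ⟨⟨⟨g1, S1⟩, g2, S2⟩, r, vb, ⟨gT, ST⟩, rfl, ⟨h1, h2, hT⟩, hvb⟩ := hg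
  obtain ⟨_, _, _, rfl, -⟩ := skel_eq_all h1
  obtain ⟨_, _, _, rfl, -⟩ := skel_eq_all h2
  obtain ⟨_, _, _, rfl, hg⟩ := skel_eq_all hT
  exact .head (.inst hvb.isVal rfl rfl)
    ((hvb.of_skelEq (skelEq_dsubst r Sr vb)).safe.ascr (by simpa using hg))

/-- `Inst Γ e' e`: `e'` is obtained from `e` by changing annotations within their skeletons and
replacing the variables bound in `Γ` by good values; a λ-binder removes its variable from `Γ`. -/
inductive Inst : GTEnv → CExpr → CExpr → Prop
  | const : Inst Γ (.const c) (.const c)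
  | op : Inst Γ a' a → Inst Γ b' b → Inst Γ (.op o a' b') (.op o a b)
  | var : Inst Γ (.var x) (.var x)
  | var_val : Γ x = some T → GoodVal (skel T.1) v → Inst Γ v (.var x)
  | lam : skel T'.1 = skel T.1 → Inst (Function.update Γ x none) e' e →
      Inst Γ (.lam x T' e') (.lam x T e)
  | app : Inst Γ a' a → Inst Γ b' b → Inst Γ (.app a' b') (.app a b)
  | tlam : Inst Γ e' e → Inst Γ (.tlam r e') (.tlam r e)
  | tapp : Inst Γ e' e → Inst Γ (.tapp e' S') (.tapp e S)
  | ascr : skel ε'.1.1 = skel ε.1.1 → skel ε'.2.1 = skel ε.2.1 → Inst Γ e' e →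
      skel T'.1 = skel T.1 → Inst Γ (.ascr ε' e' T') (.ascr ε e T)
  | err : Inst Γ .err .err

namespace Inst

theorem refl (e : CExpr) (Γ : GTEnv) : Inst Γ e e := by
  induction e generalizing Γ <;> constructor <;> first | rfl | apply_assumption

theorem mono {Γ Γ' : GTEnv} {e' e : CExpr} (h : Inst Γ e' e)
    (hΓ : ∀ y T, Γ y = some T → Γ' y = some T) : Inst Γ' e' e := by
  induction h generalizing Γ' with
  | var_val hx hg => exact .var_val (hΓ _ _ hx) hg
  | @lam _ _ _ x _ _ hT _ ih =>
    refine .lam hT (ih fun y T hy => ?_)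
    by_cases hyx : y = x
    · simp [hyx] at hy
    · rw [Function.update_of_ne hyx] at hy ⊢
      exact hΓ y T hy
  | _ => constructor <;> solve_by_elim

theorem of_skelEq {Γ : GTEnv} {e'' e' e : CExpr} (her : SkelEq e'' e') (h : Inst Γ e' e) :
    Inst Γ e'' e := by
  induction h generalizing e'' with
  | var_val hx hg => exact .var_val hx (hg.of_skelEq her)
  | _ => cases her; constructor <;> grind

theorem csubst {Γ : GTEnv} {e' e : CExpr} {x : String} {T : CTy} {w : CExpr}
    (h : Inst Γ e' e) (hx : Γ x = some T) (hw : GoodVal (skel T.1) w) :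
    Inst Γ (GS.csubst x w e') e := by
  induction h with
  | @var _ y =>
    by_cases hyx : y = x
    · subst hyx; simpa [GS.csubst] using .var_val hx hw
    · simpa [GS.csubst, hyx] using .var
  | var_val hy hg =>
    rw [csubst_eq_self _ (by simp [hg.fv_eq_empty])]
    exact .var_val hy hg
  | @lam _ _ _ y _ _ hT hb ih =>
    by_cases hyx : y = x
    · subst hyx
      simpa [GS.csubst] using .lam hT hb
    · simpa [GS.csubst, hyx] using .lam hT (ih (by simp [Ne.symm hyx, hx]))
  | _ => simp only [GS.csubst]; constructor <;> solve_by_elim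

end Inst

def SafeInst (Γ : GTEnv) (e : CExpr) (s : Sk) : Prop :=
  ∀ e', Inst Γ e' e → fv e' = ∅ → Safe s e'

section SafeInst

variable {Γ : GTEnv}

theorem safeInst_const {c : Const} {ε : Ev} {T : CTy} (hs : AscrSkel (.base (constBTy c)) ε T) :
    SafeInst Γ (.ascr ε (.const c) T) (.base (constBTy c)) := by
  intro _ h _
  cases h with | ascr h1 h2 hu hT =>
  cases hu
  exact GoodVal.safe ⟨_, c, _, rfl, hs.congr h1 h2 hT, rfl⟩

theorem safeInst_var {x : String} {T : CTy} (hx : Γ x = some T) :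
    SafeInst Γ (.var x) (skel T.1) := by
  intro _ h hfv
  cases h with
  | var => simp [fv] at hfv
  | var_val hx' hg =>
    cases hx.symm.trans hx'
    exact hg.safe

theorem safeInst_op {o : Op} {a b : CExpr} (ha : SafeInst Γ a (.base .real))
    (hb : SafeInst Γ b (.base .real)) : SafeInst Γ (.op o a b) (.base o.resTy) := by
  intro _ h hfv
  cases h with | op ha' hb' =>
  simp only [fv, Set.union_empty_iff] at hfv
  refine (ha _ ha' hfv.1).ctx (fun x => .op o x _) (fun _ _ => .opL) (.single .opLErr)
    fun va hva => ?_
  refine (hb _ hb' hfv.2).ctx (fun x => .op o va x) (fun _ _ => .opR hva.isVal)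
    (.single (.opRErr hva.isVal)) fun vb hvb => ?_
  obtain ⟨v, hst, hv⟩ := hva.exists_step_op o hvb
  exact .head hst hv.safe

theorem safeInst_lam {x : String} {T1 T : CTy} {ε : Ev} {e : CExpr} {s2 : Sk}
    (hs : AscrSkel (.arrow (skel T1.1) s2) ε T)
    (he : SafeInst (Function.update Γ x (some T1)) e s2) :
    SafeInst Γ (.ascr ε (.lam x T1 e) T) (.arrow (skel T1.1) s2) := by
  intro _ h hfv
  cases h with | ascr h1 h2 hu hT =>
  cases hu with | lam hTx hb =>
  refine GoodVal.safe ⟨_, x, _, _, _, rfl, hs.congr h1 h2 hT, hTx, hfv, fun eb hb' w hw => ?_⟩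
  have hΓ : ∀ y T, Function.update Γ x none y = some T → Function.update Γ x (some T1) y = some T :=
    fun y T hy => by by_cases hyx : y = x <;> simp_all
  refine he _ (((hb.of_skelEq hb').mono hΓ).csubst (by simp) hw) ?_
  refine Set.subset_eq_empty (fv_csubst_subset x w eb) ?_
  rw [hb'.fv_eq, hw.fv_eq_empty, Set.union_empty]
  exact hfv

theorem safeInst_app {a b : CExpr} {s1 s2 : Sk} (ha : SafeInst Γ a (.arrow s1 s2))
    (hb : SafeInst Γ b s1) : SafeInst Γ (.app a b) s2 := by
  intro _ h hfv
  cases h with | app ha' hb' =>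
  simp only [fv, Set.union_empty_iff] at hfv
  refine (ha _ ha' hfv.1).ctx (fun x => .app x _) (fun _ _ => .appL) (.single .appLErr)
    fun vf hvf => ?_
  exact (hb _ hb' hfv.2).ctx (fun x => .app vf x) (fun _ _ => .appR hvf.isVal)
    (.single (.appRErr hvf.isVal)) fun va hva => hvf.safe_app hva

theorem safeInst_tlam {r : String} {ε : Ev} {T : CTy} {e : CExpr} {s : Sk}
    (hs : AscrSkel (.all s) ε T) (he : SafeInst Γ e s) :
    SafeInst Γ (.ascr ε (.tlam r e) T) (.all s) := by
  intro _ h hfv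
  cases h with | ascr h1 h2 hu hT =>
  cases hu with | tlam hb =>
  refine (he _ hb hfv).ctx (fun a => .ascr _ (.tlam r a) _) (fun _ _ h => .ascrC (.tlamC h))
    ((Relation.ReflTransGen.single (.ascrC .tlamErr)).tail .ascrErrP) fun v hv => ?_
  exact GoodVal.safe ⟨_, r, v, _, rfl, hs.congr h1 h2 hT, hv⟩

theorem safeInst_tapp {e : CExpr} {Sr : GEnv} {s : Sk} (he : SafeInst Γ e (.all s)) :
    SafeInst Γ (.tapp e Sr) s := by
  intro _ h hfv
  cases h with | tapp hb =>
  exact (he _ hb hfv).ctx (fun a => .tapp a _) (fun _ _ => .tappC) (.single .tappErr)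
    fun v hv => hv.safe_tapp _

theorem safeInst_ascr {e : CExpr} {ε : Ev} {T : CTy} {s : Sk} (he : SafeInst Γ e s)
    (hT : skel T.1 = s) : SafeInst Γ (.ascr ε e T) s := by
  intro _ h hfv
  cases h with | ascr _ _ hb hT' =>
  exact (he _ hb hfv).ascr (hT'.trans hT)

end SafeInst

theorem Elab.safeInst {Γ : GTEnv} {e : GExpr} {ec : CExpr} {T : CTy} (h : Elab Γ e ec T) :
    SafeInst Γ ec (skel T.1) := by
  induction h with
  | const hI => exact safeInst_const (AscrSkel.of_interC hI)
  | op _ _ hop iha ihb =>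
    obtain ⟨ha, hb, hT⟩ := opCTy_skel hop
    rw [ha] at iha; rw [hb] at ihb; rw [hT]
    exact safeInst_op iha ihb
  | var hx => exact safeInst_var hx
  | lam _ hI ih => exact safeInst_lam (AscrSkel.of_interC hI) ih
  | app _ _ hd hI hc iha ihb =>
    rw [skel_of_domC_of_codC hd hc] at iha
    rw [← (interC_skel hI).1] at ihb
    exact safeInst_app iha (safeInst_ascr ihb rfl)
  | tlam _ hI ih => exact safeInst_tlam (AscrSkel.of_interC hI) ih
  | tapp _ hi ih =>
    rw [skel_of_instC hi] at ih
    exact safeInst_tapp ih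
  | ascr _ hI ih =>
    rw [(interC_skel hI).1]
    exact safeInst_ascr ih (interC_skel hI).1

theorem Elab.fv_subset {Γ : GTEnv} {e : GExpr} {ec : CExpr} {T : CTy} (h : Elab Γ e ec T) :
    fv ec ⊆ {x | Γ x ≠ none} := by
  induction h <;> grind [fv, Function.update_apply]

end GS

open GS in
/-- Type Safety of GS (Proposition 1): a well-typed closed GS expression
(i.e. one that successfully elaborates) evaluates to a result r, where r is
either a GSCheck value or the error term; in particular it does not get
stuck. -/
theorem gs_type_safety
    (e : GExpr) (e' : CExpr) (T : CTy) (h : Elab emptyEnv e e' T) :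
    ∃ r, Steps e' r ∧ (IsVal r ∨ r = CExpr.err) := by
  have hclosed : fv e' = ∅ := Set.subset_eq_empty h.fv_subset (by simp [emptyEnv])
  obtain ⟨r, hr, rfl | hg⟩ := h.safeInst e' (.refl e' emptyEnv) hclosed
  · exact ⟨_, hr, .inr rfl⟩
  · exact ⟨r, hr, .inl hg.isVal⟩
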